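/- With M the upper triangular 4×4 matrix diag-block [[1,0,0,0],[0,√(2pq/(p+q)), (p−q)/√(2pq(p+q)),0],[0,0,√((p+q)/(2pq)),0],[0,0,0,1]], the triangular R-matrix R = [[1,0,0,0],[0,2pq/(p+q),(p−q)/(p+q),0],[0,(q−p)/(p+q),2/(p+q),0],[0,0,0,1]] factorizes as R = ((21)M)⁻¹·M, where (21)M = P·M·P with P the flip matrix. -/

import Mathlib

open Matrix

noncomputable section

/-- The 4×4 flip (permutation) matrix swapping the middle two basis vectors. -/
def Pflip : Matrix (Fin 4) (Fin 4) ℝ :=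
  !![1, 0, 0, 0;
     0, 0, 1, 0;
     0, 1, 0, 0;
     0, 0, 0, 1]

/-!
Only the middle 2×2 block matters. For `N = [[s, b], [0, 1/s]]` the flipped matrix
`[[1/s, 0], [b, s]]` times `[[s², s b], [-s b, 1/s² - b²]]` is `N`, and the flip conjugate of `N`
has determinant `1`, so `((21)N)⁻¹ N` is that matrix. With `s² = 2pq/(p+q)` and
`b = (p-q)/(s (p+q))` its entries are those of `R`; the last one because
`(p+q)² - (p-q)² = 4pq`.
-/

def upperFactor (s b : ℝ) : Matrix (Fin 4) (Fin 4) ℝ :=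
  !![1, 0, 0, 0;
     0, s, b, 0;
     0, 0, 1 / s, 0;
     0, 0, 0, 1]

def flipInvMulUpperFactor (s b : ℝ) : Matrix (Fin 4) (Fin 4) ℝ :=
  !![1, 0, 0, 0;
     0, s ^ 2, s * b, 0;
     0, -(s * b), (1 / s) ^ 2 - b ^ 2, 0;
     0, 0, 0, 1]

theorem det_Pflip : det Pflip = -1 := by
  simp [Pflip, det_succ_row_zero, Fin.sum_univ_succ]

theorem det_upperFactor {s : ℝ} (hs : s ≠ 0) (b : ℝ) : (upperFactor s b).det = 1 := by
  simp [upperFactor, det_succ_row_zero, Fin.sum_univ_succ, hs]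

theorem isUnit_det_flip_upperFactor {s : ℝ} (hs : s ≠ 0) (b : ℝ) :
    IsUnit (Pflip * upperFactor s b * Pflip).det := by
  simp [det_mul, det_Pflip, det_upperFactor hs]

theorem flip_upperFactor_mul_flipInvMulUpperFactor {s : ℝ} (hs : s ≠ 0) (b : ℝ) :
    Pflip * upperFactor s b * Pflip * flipInvMulUpperFactor s b = upperFactor s b := by
  ext i j
  fin_cases i <;> fin_cases j <;>
    simp [Pflip, upperFactor, flipInvMulUpperFactor, mul_apply, Fin.sum_univ_four] <;>
    field_simp <;> ring

theorem flip_upperFactor_inv_mul_upperFactor {s : ℝ} (hs : s ≠ 0) (b : ℝ) :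
    (Pflip * upperFactor s b * Pflip)⁻¹ * upperFactor s b = flipInvMulUpperFactor s b := by
  set A := Pflip * upperFactor s b * Pflip
  calc A⁻¹ * upperFactor s b = A⁻¹ * (A * flipInvMulUpperFactor s b) := by
        rw [flip_upperFactor_mul_flipInvMulUpperFactor hs b]
    _ = flipInvMulUpperFactor s b :=
        nonsing_inv_mul_cancel_left _ _ (isUnit_det_flip_upperFactor hs b)

theorem stmt14_general (p q : ℝ) (hp : 0 < p) (hq : 0 < q) :
    let s : ℝ := Real.sqrt (2 * p * q / (p + q))
    let M : Matrix (Fin 4) (Fin 4) ℝ :=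
      !![1, 0, 0, 0;
         0, s, (p - q) / Real.sqrt (2 * p * q * (p + q)), 0;
         0, 0, 1 / s, 0;
         0, 0, 0, 1]
    let R : Matrix (Fin 4) (Fin 4) ℝ :=
      !![1, 0, 0, 0;
         0, 2 * p * q / (p + q), (p - q) / (p + q), 0;
         0, (q - p) / (p + q), 2 / (p + q), 0;
         0, 0, 0, 1]
    R = (Pflip * M * Pflip)⁻¹ * M := by
  intro s M R
  have hpq : 0 < p + q := by positivity
  have hs : 0 < s := Real.sqrt_pos.mpr (by positivity)
  have hs_sq : s ^ 2 = 2 * p * q / (p + q) := Real.sq_sqrt (by positivity)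
  have hsqrt : Real.sqrt (2 * p * q * (p + q)) = s * (p + q) := by
    rw [show 2 * p * q * (p + q) = 2 * p * q / (p + q) * (p + q) ^ 2 by field_simp,
      Real.sqrt_mul (by positivity), Real.sqrt_sq hpq.le]
  show R = (Pflip * upperFactor s _ * Pflip)⁻¹ * upperFactor s _
  rw [flip_upperFactor_inv_mul_upperFactor hs.ne', hsqrt]
  have hsb : s * ((p - q) / (s * (p + q))) = (p - q) / (p + q) := by
    field_simp
  have hlast : (1 / s) ^ 2 - ((p - q) / (s * (p + q))) ^ 2 = 2 / (p + q) := by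
    field_simp
    rw [hs_sq]
    field_simp
    ring
  have hneg : -((p - q) / (p + q)) = (q - p) / (p + q) := by ring
  rw [flipInvMulUpperFactor, hs_sq, hsb, hlast, hneg]

theorem stmt14 (p q : ℝ) (hp : 0 < p) (hq : 0 < q) (hpq : p + q ≠ 0) :
    let s : ℝ := Real.sqrt (2 * p * q / (p + q))
    let M : Matrix (Fin 4) (Fin 4) ℝ :=
      !![1, 0, 0, 0;
         0, s, (p - q) / Real.sqrt (2 * p * q * (p + q)), 0;
         0, 0, 1 / s, 0;
         0, 0, 0, 1]
    let R : Matrix (Fin 4) (Fin 4) ℝ :=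
      !![1, 0, 0, 0;
         0, 2 * p * q / (p + q), (p - q) / (p + q), 0;
         0, (q - p) / (p + q), 2 / (p + q), 0;
         0, 0, 0, 1]
    R = (Pflip * M * Pflip)⁻¹ * M :=
  stmt14_general p q hp hq
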